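/- Fix ζ' ∈ ℝ^{n-1}, λ ∈ ℂ with Re(λ) ≥ 0, (λ, ζ') ≠ (0,0), positive constants γ¹,γ²,γ³, and norms |ζ'|_{g_i} > 0 (for ζ' ≠ 0). Suppose φ₁,φ₂,φ₃ : [0,∞) → ℂ are smooth, decay to 0 at infinity together with all derivatives, and solve: λφᵢ + |ζ'|⁴_{g_i} φᵢ + φᵢ'''' = 0 on (0,∞) for i=1,2,3; at y=0: Σᵢ γⁱφᵢ = 0; φ₁' = φ₂' = φ₃'; Σᵢ γⁱ(|ζ'|²_{g_i} φᵢ − φᵢ'') = 0; φ₁''' − φ₂''' − |ζ'|²_{g_1}φ₁' + |ζ'|²_{g_2}φ₂' = 0; and φ₂''' − φ₃''' − |ζ'|²_{g_2}φ₂' + |ζ'|²_{g_3}φ₃' = 0. Then φ₁ = φ₂ = φ₃ = 0. -/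

import Mathlib

open Filter MeasureTheory Set intervalIntegral

namespace Stmt5Aux

open Complex

/-- Iterated derivatives of a smooth function have derivatives. -/
lemma hasDerivAt_iter (f : ℝ → ℂ) (hf : ContDiff ℝ (⊤ : ℕ∞) f) (k : ℕ) (x : ℝ) :
    HasDerivAt (iteratedDeriv k f) (iteratedDeriv (k + 1) f x) x := by
  rw [iteratedDeriv_succ]
  exact ((hf.differentiable_iteratedDeriv k (by exact_mod_cast ENat.coe_lt_top k)) x).hasDerivAt

/-- Integration by parts twice for `conj f * f''''`. -/
lemma ibp (f : ℝ → ℂ) (hf : ContDiff ℝ (⊤ : ℕ∞) f) (R : ℝ) :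
    ∫ y in (0:ℝ)..R, (starRingEnd ℂ) (f y) * iteratedDeriv 4 f y
      = ((starRingEnd ℂ) (f R) * iteratedDeriv 3 f R
          - (starRingEnd ℂ) (deriv f R) * iteratedDeriv 2 f R)
        - ((starRingEnd ℂ) (f 0) * iteratedDeriv 3 f 0
          - (starRingEnd ℂ) (deriv f 0) * iteratedDeriv 2 f 0)
        + ∫ y in (0:ℝ)..R, (starRingEnd ℂ) (iteratedDeriv 2 f y) * iteratedDeriv 2 f y := by
  have hc : ∀ k : ℕ, Continuous (iteratedDeriv k f) := fun k =>
    hf.continuous_iteratedDeriv k (by exact_mod_cast le_top)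
  have hd : ∀ (k : ℕ) (x : ℝ), HasDerivAt (iteratedDeriv k f) (iteratedDeriv (k + 1) f x) x :=
    hasDerivAt_iter f hf
  have hconj : ∀ (k : ℕ) (x : ℝ), HasDerivAt (fun y => (starRingEnd ℂ) (iteratedDeriv k f y))
      ((starRingEnd ℂ) (iteratedDeriv (k + 1) f x)) x := fun k x => (hd k x).star
  have hcconj : ∀ k : ℕ, Continuous (fun y => (starRingEnd ℂ) (iteratedDeriv k f y)) :=
    fun k => Complex.continuous_conj.comp (hc k)
  have h1 := integral_mul_deriv_eq_deriv_mul (a := (0:ℝ)) (b := R)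
    (u := fun y => (starRingEnd ℂ) (f y)) (u' := fun y => (starRingEnd ℂ) (deriv f y))
    (v := iteratedDeriv 3 f) (v' := iteratedDeriv 4 f)
    (fun x _ => by simpa [iteratedDeriv_one, iteratedDeriv_zero] using hconj 0 x)
    (fun x _ => hd 3 x)
    ((Complex.continuous_conj.comp ((hc 1).congr (by simp [iteratedDeriv_one]))).intervalIntegrable _ _)
    ((hc 4).intervalIntegrable _ _)
  have h2 := integral_mul_deriv_eq_deriv_mul (a := (0:ℝ)) (b := R)
    (u := fun y => (starRingEnd ℂ) (deriv f y)) (u' := fun y => (starRingEnd ℂ) (iteratedDeriv 2 f y))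
    (v := iteratedDeriv 2 f) (v' := iteratedDeriv 3 f)
    (fun x _ => by simpa [iteratedDeriv_one] using hconj 1 x)
    (fun x _ => hd 2 x)
    ((hcconj 2).intervalIntegrable _ _)
    ((hc 3).intervalIntegrable _ _)
  rw [h1, h2]
  ring

/-- A continuous nonnegative function with vanishing integrals on `[0,R]` vanishes on `[0,∞)`. -/
lemma eq_zero_of_integral_zero (g : ℝ → ℝ) (hg : Continuous g) (hnn : ∀ y, 0 ≤ g y)
    (hz : ∀ R, 0 ≤ R → ∫ y in (0:ℝ)..R, g y = 0) : ∀ y, 0 ≤ y → g y = 0 := by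
  have hIoi : ∀ y, 0 < y → g y = 0 := by
    intro y hy
    by_contra h
    have hgy : 0 < g y := lt_of_le_of_ne (hnn y) (Ne.symm h)
    have hU : {x | 0 < g x} ∈ nhds y := (isOpen_lt continuous_const hg).mem_nhds hgy
    obtain ⟨ε, hε, hball⟩ := Metric.mem_nhds_iff.1 hU
    set δ := min (ε / 2) y with hδdef
    have hδ : 0 < δ := lt_min (by linarith) hy
    have hδy : δ ≤ y := min_le_right _ _
    have hδε : δ ≤ ε / 2 := min_le_left _ _
    have h1 : (0:ℝ) ≤ y - δ := by linarith
    have hpos : 0 < ∫ x in (y - δ)..(y + δ), g x := by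
      refine intervalIntegral_pos_of_pos_on
        (hg.intervalIntegrable (μ := volume) _ _) (fun x hx => ?_) (by linarith)
      apply hball
      rw [Metric.mem_ball, Real.dist_eq, abs_lt]
      constructor <;> [linarith [hx.1]; linarith [hx.2]]
    have hadd := integral_add_adjacent_intervals (μ := volume) (a := (0:ℝ)) (b := y - δ) (c := y + δ)
      (hg.intervalIntegrable 0 (y - δ)) (hg.intervalIntegrable (y - δ) (y + δ))
    rw [hz _ h1, hz _ (by linarith)] at hadd
    linarith
  intro y hy
  rcases eq_or_lt_of_le hy with h | h
  · have h0 : Tendsto g (nhdsWithin 0 (Ioi 0)) (nhds (g 0)) :=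
      (hg.tendsto 0).mono_left nhdsWithin_le_nhds
    have h1 : Tendsto g (nhdsWithin 0 (Ioi 0)) (nhds 0) := by
      apply Tendsto.congr' _ tendsto_const_nhds
      filter_upwards [self_mem_nhdsWithin] with x hx using (hIoi x hx).symm
    rw [← h]
    exact tendsto_nhds_unique h0 h1
  · exact hIoi y h

/-- A continuous function with vanishing derivative on `[0,∞)` is constant there. -/
lemma const_of_deriv_zero (f : ℝ → ℂ) (hf : Continuous f)
    (hd : ∀ x : ℝ, 0 ≤ x → HasDerivAt f 0 x) : ∀ x : ℝ, 0 ≤ x → f x = f 0 := by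
  intro x hx
  exact constant_of_has_deriv_right_zero (a := 0) (b := x) hf.continuousOn
    (fun z hz => (hd z hz.1).hasDerivWithinAt) x ⟨hx, le_rfl⟩

/-- A function constant on `[0,∞)` tending to `0` at `∞` vanishes on `[0,∞)`. -/
lemma zero_of_const_decay (f : ℝ → ℂ) (hconst : ∀ x : ℝ, 0 ≤ x → f x = f 0)
    (hdec : Tendsto f atTop (nhds 0)) : ∀ x : ℝ, 0 ≤ x → f x = 0 := by
  have h1 : Tendsto f atTop (nhds (f 0)) := by
    apply Tendsto.congr' _ tendsto_const_nhds
    filter_upwards [eventually_ge_atTop (0:ℝ)] with x hx using (hconst x hx).symm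
  have h0 : f 0 = 0 := tendsto_nhds_unique h1 hdec
  intro x hx
  rw [hconst x hx, h0]

end Stmt5Aux

open Stmt5Aux

/-- The Lopatinskii–Shapiro condition for the linearized surface diffusion flow with
triple junction boundary conditions: the only decaying solution of the boundary ODE
system on the half line is zero. -/
theorem stmt5 (n : ℕ) (ζ' : EuclideanSpace ℝ (Fin (n - 1))) (lam : ℂ)
    (hRe : 0 ≤ lam.re)
    (m : Fin 3 → ℝ) (hm : ∀ i, 0 ≤ m i)
    (hmζ : ζ' ≠ 0 → ∀ i, 0 < m i)
    (hnd : lam ≠ 0 ∨ ζ' ≠ 0)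
    (γ : Fin 3 → ℝ) (hγ : ∀ i, 0 < γ i)
    (φ : Fin 3 → ℝ → ℂ)
    (hsmooth : ∀ i, ContDiff ℝ (⊤ : ℕ∞) (φ i))
    (hdecay : ∀ i k, Tendsto (iteratedDeriv k (φ i)) atTop (nhds 0))
    (hODE : ∀ i, ∀ y : ℝ, 0 < y →
      lam * φ i y + ((m i : ℂ)) ^ 4 * φ i y + iteratedDeriv 4 (φ i) y = 0)
    (hCC : (γ 0 : ℂ) * φ 0 0 + (γ 1 : ℂ) * φ 1 0 + (γ 2 : ℂ) * φ 2 0 = 0)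
    (hAC1 : deriv (φ 0) 0 = deriv (φ 1) 0)
    (hAC2 : deriv (φ 1) 0 = deriv (φ 2) 0)
    (hCCP : (γ 0 : ℂ) * (((m 0 : ℂ)) ^ 2 * φ 0 0 - iteratedDeriv 2 (φ 0) 0)
      + (γ 1 : ℂ) * (((m 1 : ℂ)) ^ 2 * φ 1 0 - iteratedDeriv 2 (φ 1) 0)
      + (γ 2 : ℂ) * (((m 2 : ℂ)) ^ 2 * φ 2 0 - iteratedDeriv 2 (φ 2) 0) = 0)
    (hFB1 : iteratedDeriv 3 (φ 0) 0 - iteratedDeriv 3 (φ 1) 0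
      - ((m 0 : ℂ)) ^ 2 * deriv (φ 0) 0 + ((m 1 : ℂ)) ^ 2 * deriv (φ 1) 0 = 0)
    (hFB2 : iteratedDeriv 3 (φ 1) 0 - iteratedDeriv 3 (φ 2) 0
      - ((m 1 : ℂ)) ^ 2 * deriv (φ 1) 0 + ((m 2 : ℂ)) ^ 2 * deriv (φ 2) 0 = 0) :
    ∀ i, ∀ y : ℝ, 0 ≤ y → φ i y = 0 := by
  classical
  have hc : ∀ i (k : ℕ), Continuous (iteratedDeriv k (φ i)) := fun i k =>
    (hsmooth i).continuous_iteratedDeriv k (by exact_mod_cast le_top)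
  -- Step 1: the ODE holds on [0, ∞)
  have hODE' : ∀ i, ∀ y : ℝ, 0 ≤ y →
      iteratedDeriv 4 (φ i) y = -(lam + (m i : ℂ) ^ 4) * φ i y := by
    intro i
    have heq : Set.EqOn
        (fun y => lam * φ i y + ((m i : ℂ)) ^ 4 * φ i y + iteratedDeriv 4 (φ i) y)
        (fun _ => (0:ℂ)) (closure (Ioi (0:ℝ))) := by
      apply Set.EqOn.closure (fun y hy => hODE i y hy)
      · exact ((continuous_const.mul (hsmooth i).continuous).add
          (continuous_const.mul (hsmooth i).continuous)).add (hc i 4)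
      · exact continuous_const
    intro y hy
    have := heq (by rwa [closure_Ioi])
    simp only at this
    linear_combination this
  -- abbreviations
  set B : Fin 3 → ℝ → ℂ := fun i y =>
    (starRingEnd ℂ) (φ i y) * iteratedDeriv 3 (φ i) y
      - (starRingEnd ℂ) (deriv (φ i) y) * iteratedDeriv 2 (φ i) y with hB
  set K : Fin 3 → ℝ → ℝ := fun i R => ∫ y in (0:ℝ)..R, Complex.normSq (φ i y) with hK
  set L : Fin 3 → ℝ → ℝ := fun i R =>
    ∫ y in (0:ℝ)..R, Complex.normSq (iteratedDeriv 2 (φ i) y) with hL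
  -- Step 2: per-index energy identity
  have hid : ∀ i, ∀ R : ℝ, 0 ≤ R →
      (lam + (m i : ℂ) ^ 4) * (K i R : ℂ) + (L i R : ℂ) = B i 0 - B i R := by
    intro i R hR
    have hibp := ibp (φ i) (hsmooth i) R
    have e1 : (∫ y in (0:ℝ)..R, (starRingEnd ℂ) (φ i y) * iteratedDeriv 4 (φ i) y)
        = -(lam + (m i : ℂ) ^ 4) * (K i R : ℂ) := by
      have e2 : (∫ y in (0:ℝ)..R, (starRingEnd ℂ) (φ i y) * iteratedDeriv 4 (φ i) y)
          = ∫ y in (0:ℝ)..R, -(lam + (m i : ℂ) ^ 4) * ((Complex.normSq (φ i y) : ℝ) : ℂ) := by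
        apply intervalIntegral.integral_congr
        intro y hy
        rw [uIcc_of_le hR] at hy
        simp only [hODE' i y hy.1, Complex.normSq_eq_conj_mul_self]
        ring
      rw [e2, intervalIntegral.integral_const_mul, intervalIntegral.integral_ofReal]
    have e3 : (∫ y in (0:ℝ)..R,
        (starRingEnd ℂ) (iteratedDeriv 2 (φ i) y) * iteratedDeriv 2 (φ i) y)
        = (L i R : ℂ) := by
      rw [hL]
      rw [← intervalIntegral.integral_ofReal]
      apply intervalIntegral.integral_congr
      intro y _
      simp only [Complex.normSq_eq_conj_mul_self]
    rw [e1, e3] at hibp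
    rw [hB]
    simp only
    linear_combination -hibp
  -- Step 3: the boundary term Z has zero real part
  set d : ℂ := deriv (φ 0) 0 with hd0
  rw [← hAC1] at hFB1
  rw [← hAC1] at hAC2
  rw [← hAC2, ← hAC1] at hFB2
  set w : ℂ := (γ 0 : ℂ) * (m 0 : ℂ) ^ 2 * φ 0 0 + (γ 1 : ℂ) * (m 1 : ℂ) ^ 2 * φ 1 0
    + (γ 2 : ℂ) * (m 2 : ℂ) ^ 2 * φ 2 0 with hw
  have hCC' : (γ 0 : ℂ) * (starRingEnd ℂ) (φ 0 0) + (γ 1 : ℂ) * (starRingEnd ℂ) (φ 1 0)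
      + (γ 2 : ℂ) * (starRingEnd ℂ) (φ 2 0) = 0 := by
    have := congrArg (starRingEnd ℂ) hCC
    simpa [map_add, map_mul, Complex.conj_ofReal] using this
  have hZeq : (γ 0 : ℂ) * B 0 0 + (γ 1 : ℂ) * B 1 0 + (γ 2 : ℂ) * B 2 0
      = d * (starRingEnd ℂ) w - (starRingEnd ℂ) d * w := by
    rw [hB, hw, hd0]
    simp only
    rw [← hAC1, ← hAC2]
    simp only [map_add, map_mul, Complex.conj_ofReal, map_pow]
    linear_combination (starRingEnd ℂ) (deriv (φ 0) 0) * hCCP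
      + (iteratedDeriv 3 (φ 0) 0 - (m 0 : ℂ) ^ 2 * deriv (φ 0) 0) * hCC'
      - (γ 1 : ℂ) * (starRingEnd ℂ) (φ 1 0) * hFB1
      - (γ 2 : ℂ) * (starRingEnd ℂ) (φ 2 0) * hFB1
      - (γ 2 : ℂ) * (starRingEnd ℂ) (φ 2 0) * hFB2
  have hZre : ((γ 0 : ℂ) * B 0 0 + (γ 1 : ℂ) * B 1 0 + (γ 2 : ℂ) * B 2 0).re = 0 := by
    rw [hZeq]
    have : (starRingEnd ℂ) d * w = (starRingEnd ℂ) (d * (starRingEnd ℂ) w) := by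
      rw [map_mul, Complex.conj_conj]
    rw [this, Complex.sub_re, Complex.conj_re, sub_self]
  -- Step 4: nonnegativity
  have hKnn : ∀ i R, 0 ≤ R → 0 ≤ K i R := fun i R hR =>
    intervalIntegral.integral_nonneg hR fun x _ => Complex.normSq_nonneg _
  have hLnn : ∀ i R, 0 ≤ R → 0 ≤ L i R := fun i R hR =>
    intervalIntegral.integral_nonneg hR fun x _ => Complex.normSq_nonneg _
  -- Step 5: the key real inequality
  have hkey : ∀ R : ℝ, 0 ≤ R → ∀ i, γ i * L i R ≤
      ‖(γ 0 : ℂ) * B 0 R + (γ 1 : ℂ) * B 1 R + (γ 2 : ℂ) * B 2 R‖ := by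
    intro R hR
    have hsum : (γ 0 : ℂ) * ((lam + (m 0 : ℂ) ^ 4) * (K 0 R : ℂ) + (L 0 R : ℂ))
        + (γ 1 : ℂ) * ((lam + (m 1 : ℂ) ^ 4) * (K 1 R : ℂ) + (L 1 R : ℂ))
        + (γ 2 : ℂ) * ((lam + (m 2 : ℂ) ^ 4) * (K 2 R : ℂ) + (L 2 R : ℂ))
        = ((γ 0 : ℂ) * B 0 0 + (γ 1 : ℂ) * B 1 0 + (γ 2 : ℂ) * B 2 0)
          - ((γ 0 : ℂ) * B 0 R + (γ 1 : ℂ) * B 1 R + (γ 2 : ℂ) * B 2 R) := by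
      rw [hid 0 R hR, hid 1 R hR, hid 2 R hR]
      ring
    have hre := congrArg Complex.re hsum
    simp only [← Complex.ofReal_pow, Complex.add_re, Complex.sub_re, Complex.mul_re,
      Complex.ofReal_re, Complex.ofReal_im, Complex.add_im, Complex.mul_im, hZre,
      mul_zero, zero_mul, sub_zero, add_zero, zero_add, zero_sub] at hre
    -- hre is now a real equation
    have hWre : -((γ 0 : ℂ) * B 0 R + (γ 1 : ℂ) * B 1 R + (γ 2 : ℂ) * B 2 R).re
        ≤ ‖(γ 0 : ℂ) * B 0 R + (γ 1 : ℂ) * B 1 R + (γ 2 : ℂ) * B 2 R‖ := by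
      exact (neg_le_abs _).trans (Complex.abs_re_le_norm _)
    simp only [Complex.add_re, Complex.mul_re, Complex.ofReal_re, Complex.ofReal_im,
      zero_mul, sub_zero] at hWre
    have hp0 : 0 ≤ (lam.re + (m 0 : ℝ) ^ 4) * K 0 R :=
      mul_nonneg (by positivity) (hKnn 0 R hR)
    have hp1 : 0 ≤ (lam.re + (m 1 : ℝ) ^ 4) * K 1 R :=
      mul_nonneg (by positivity) (hKnn 1 R hR)
    have hp2 : 0 ≤ (lam.re + (m 2 : ℝ) ^ 4) * K 2 R :=
      mul_nonneg (by positivity) (hKnn 2 R hR)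
    have key : ∀ j : Fin 3, γ j * L j R ≤
        ‖(γ 0 : ℂ) * B 0 R + (γ 1 : ℂ) * B 1 R + (γ 2 : ℂ) * B 2 R‖ → True := fun _ _ => trivial
    have h0 : γ 0 * L 0 R ≤ ‖(γ 0 : ℂ) * B 0 R + (γ 1 : ℂ) * B 1 R + (γ 2 : ℂ) * B 2 R‖ := by
      nlinarith [mul_nonneg (hγ 1).le (hLnn 1 R hR), mul_nonneg (hγ 2).le (hLnn 2 R hR),
        mul_nonneg (hγ 0).le hp0, mul_nonneg (hγ 1).le hp1, mul_nonneg (hγ 2).le hp2]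
    have h1 : γ 1 * L 1 R ≤ ‖(γ 0 : ℂ) * B 0 R + (γ 1 : ℂ) * B 1 R + (γ 2 : ℂ) * B 2 R‖ := by
      nlinarith [mul_nonneg (hγ 0).le (hLnn 0 R hR), mul_nonneg (hγ 2).le (hLnn 2 R hR),
        mul_nonneg (hγ 0).le hp0, mul_nonneg (hγ 1).le hp1, mul_nonneg (hγ 2).le hp2]
    have h2 : γ 2 * L 2 R ≤ ‖(γ 0 : ℂ) * B 0 R + (γ 1 : ℂ) * B 1 R + (γ 2 : ℂ) * B 2 R‖ := by
      nlinarith [mul_nonneg (hγ 0).le (hLnn 0 R hR), mul_nonneg (hγ 1).le (hLnn 1 R hR),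
        mul_nonneg (hγ 0).le hp0, mul_nonneg (hγ 1).le hp1, mul_nonneg (hγ 2).le hp2]
    intro i
    fin_cases i
    · exact h0
    · exact h1
    · exact h2
  -- Step 6: the boundary terms tend to 0 at infinity
  have hBlim : ∀ i, Tendsto (fun R => B i R) atTop (nhds 0) := by
    intro i
    have h0 : Tendsto (φ i) atTop (nhds 0) := by simpa [iteratedDeriv_zero] using hdecay i 0
    have h1 : Tendsto (deriv (φ i)) atTop (nhds 0) := by
      simpa [iteratedDeriv_one] using hdecay i 1
    have h2 := hdecay i 2
    have h3 := hdecay i 3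
    have hc0 : Tendsto (fun R => (starRingEnd ℂ) (φ i R)) atTop (nhds 0) := by
      simpa [Function.comp_def] using (Complex.continuous_conj.tendsto 0).comp h0
    have hc1 : Tendsto (fun R => (starRingEnd ℂ) (deriv (φ i) R)) atTop (nhds 0) := by
      simpa [Function.comp_def] using (Complex.continuous_conj.tendsto 0).comp h1
    rw [hB]
    simpa using (hc0.mul h3).sub (hc1.mul h2)
  have hWlim : Tendsto (fun R => ‖(γ 0 : ℂ) * B 0 R + (γ 1 : ℂ) * B 1 R + (γ 2 : ℂ) * B 2 R‖)
      atTop (nhds 0) := by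
    have : Tendsto (fun R => (γ 0 : ℂ) * B 0 R + (γ 1 : ℂ) * B 1 R + (γ 2 : ℂ) * B 2 R)
        atTop (nhds 0) := by
      simpa using ((tendsto_const_nhds.mul (hBlim 0)).add
        (tendsto_const_nhds.mul (hBlim 1))).add (tendsto_const_nhds.mul (hBlim 2))
    simpa using this.norm
  -- Step 7: L i R = 0 for all R ≥ 0
  have hL0 : ∀ i, ∀ R : ℝ, 0 ≤ R → L i R = 0 := by
    intro i R hR
    refine le_antisymm ?_ (hLnn i R hR)
    have hdiv : Tendsto (fun R' => ‖(γ 0 : ℂ) * B 0 R' + (γ 1 : ℂ) * B 1 R'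
        + (γ 2 : ℂ) * B 2 R'‖ / γ i) atTop (nhds 0) := by
      simpa using hWlim.div_const (γ i)
    refine ge_of_tendsto hdiv ?_
    filter_upwards [eventually_ge_atTop R] with R' hR'
    have hmono : L i R ≤ L i R' := by
      apply intervalIntegral.integral_mono_interval le_rfl hR hR'
      · exact ae_of_all _ fun x => Complex.normSq_nonneg _
      · exact ((Complex.continuous_normSq.comp (hc i 2)).intervalIntegrable _ _)
    have h2 := hkey R' (hR.trans hR') i
    rw [le_div_iff₀ (hγ i)]
    calc L i R * γ i = γ i * L i R := by ring
    _ ≤ γ i * L i R' := by nlinarith [(hγ i).le]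
    _ ≤ _ := h2
  -- Step 8: second derivative vanishes on [0, ∞)
  have hdd : ∀ i, ∀ y : ℝ, 0 ≤ y → iteratedDeriv 2 (φ i) y = 0 := by
    intro i y hy
    have := eq_zero_of_integral_zero (fun y => Complex.normSq (iteratedDeriv 2 (φ i) y))
      (Complex.continuous_normSq.comp (hc i 2)) (fun y => Complex.normSq_nonneg _)
      (fun R hR => hL0 i R hR) y hy
    exact Complex.normSq_eq_zero.1 this
  -- Step 9: first derivative vanishes on [0, ∞)
  have hd1 : ∀ i, ∀ y : ℝ, 0 ≤ y → deriv (φ i) y = 0 := by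
    intro i
    apply zero_of_const_decay
    · apply const_of_deriv_zero _ ((hc i 1).congr (by simp [iteratedDeriv_one]))
      intro x hx
      have h := hasDerivAt_iter (φ i) (hsmooth i) 1 x
      rw [hdd i x hx] at h
      exact (by simpa [iteratedDeriv_one] using h : HasDerivAt (deriv (φ i)) 0 x)
    · simpa [iteratedDeriv_one] using hdecay i 1
  -- Step 10: φ vanishes on [0, ∞)
  intro i
  apply zero_of_const_decay
  · apply const_of_deriv_zero _ ((hc i 0).congr (by simp [iteratedDeriv_zero]))
    intro x hx
    have h := hasDerivAt_iter (φ i) (hsmooth i) 0 x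
    rw [iteratedDeriv_one] at h
    rw [hd1 i x hx] at h
    simpa [iteratedDeriv_zero] using h
  · simpa [iteratedDeriv_zero] using hdecay i 0
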